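/- Janson's inequality implication: let {X_v}_{v∈V} be centered random variables with |X_v| ≤ b a.s., admitting a dependency graph G with chromatic number χ. If variables in distinct color classes of any proper χ-coloring with no edges between independent sets are mutually independent, then for all t > 0, P(|Σ_v X_v| > t) ≤ 2 exp(-t² / (2 χ |V| b²)). -/

import Mathlib

open MeasureTheory ProbabilityTheory Real Finset
open scoped NNReal

/-!
Split the sum along the colour classes of a proper `χ`-colouring. Inside a class no two vertices
are adjacent, so the dependency-graph property makes each summand independent of the sum of the
others and the class sum is sub-Gaussian with parameter `#class * b²` (Hoeffding's lemma for each
vertex). The classes themselves are dependent, but sub-Gaussian parameters of arbitrary summands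
satisfy `√c(X + Y) ≤ √c(X) + √c(Y)`, so by Cauchy–Schwarz the whole sum has parameter
`χ * ∑ #class * b² = χ |V| b²`, and the Chernoff bound on both tails finishes.
-/

namespace ProbabilityTheory

variable {Ω ι : Type*} [MeasurableSpace Ω] {μ : Measure Ω}

lemma hasSubgaussianMGF_of_abs_le [IsProbabilityMeasure μ] {X : Ω → ℝ} {b : ℝ}
    (hm : AEMeasurable X μ) (hb : ∀ᵐ ω ∂μ, |X ω| ≤ b) (hc : μ[X] = 0) :
    HasSubgaussianMGF X (‖b‖₊ ^ 2) μ := by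
  have h := hasSubgaussianMGF_of_mem_Icc_of_integral_eq_zero (a := -b) (b := b) hm
    (by filter_upwards [hb] with ω h using abs_le.1 h) hc
  convert h using 2
  rw [sub_neg_eq_add, ← two_mul, nnnorm_mul]
  simp

namespace HasSubgaussianMGF

lemma mono {X : Ω → ℝ} {c c' : ℝ≥0} (h : HasSubgaussianMGF X c μ) (hc : c ≤ c') :
    HasSubgaussianMGF X c' μ where
  integrable_exp_mul := h.integrable_exp_mul
  mgf_le t := (h.mgf_le t).trans (exp_le_exp.2 (by gcongr))

lemma sum_sqrt [IsZeroOrProbabilityMeasure μ] {X : ι → Ω → ℝ} {c : ι → ℝ≥0}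
    (s : Finset ι) (h : ∀ i ∈ s, HasSubgaussianMGF (X i) (c i) μ) :
    HasSubgaussianMGF (fun ω ↦ ∑ i ∈ s, X i ω) ((∑ i ∈ s, (c i).sqrt) ^ 2) μ := by
  classical
  induction s using Finset.induction_on with
  | empty => simp
  | insert i s hi ih =>
    have := (h i (mem_insert_self i s)).add (ih fun j hj ↦ h j (mem_insert_of_mem hj))
    simpa [sum_insert hi] using this

lemma sum_card_mul [IsZeroOrProbabilityMeasure μ] {X : ι → Ω → ℝ} {c : ι → ℝ≥0}
    (s : Finset ι) (h : ∀ i ∈ s, HasSubgaussianMGF (X i) (c i) μ) :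
    HasSubgaussianMGF (fun ω ↦ ∑ i ∈ s, X i ω) (#s * ∑ i ∈ s, c i) μ :=
  (sum_sqrt s h).mono <| by
    simpa using sq_sum_le_card_mul_sum_sq (s := s) (f := fun i ↦ (c i).sqrt)

lemma measureReal_abs_ge_le {X : Ω → ℝ} {c : ℝ≥0}
    (h : HasSubgaussianMGF X c μ) {ε : ℝ} (hε : 0 ≤ ε) :
    μ.real {ω | ε ≤ |X ω|} ≤ 2 * exp (-ε ^ 2 / (2 * c)) := by
  have hsplit : {ω | ε ≤ |X ω|} = {ω | ε ≤ X ω} ∪ {ω | ε ≤ (-X) ω} := by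
    ext ω
    simp [le_abs]
  calc μ.real {ω | ε ≤ |X ω|}
      ≤ μ.real {ω | ε ≤ X ω} + μ.real {ω | ε ≤ (-X) ω} :=
        hsplit ▸ measureReal_union_le _ _
    _ ≤ exp (-ε ^ 2 / (2 * c)) + exp (-ε ^ 2 / (2 * c)) :=
        add_le_add (h.measure_ge_le hε) (h.neg.measure_ge_le hε)
    _ = 2 * exp (-ε ^ 2 / (2 * c)) := by ring

end HasSubgaussianMGF

end ProbabilityTheory

namespace SimpleGraph

variable {Ω V : Type*} [MeasurableSpace Ω] {μ : Measure Ω}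

def IsDependencyGraph {β : Type*} [MeasurableSpace β] (G : SimpleGraph V) (X : V → Ω → β)
    (μ : Measure Ω) : Prop :=
  ∀ U W : Set V, Disjoint U W → (∀ u ∈ U, ∀ w ∈ W, ¬ G.Adj u w) →
    Indep (⨆ u ∈ U, MeasurableSpace.comap (X u) inferInstance)
      (⨆ w ∈ W, MeasurableSpace.comap (X w) inferInstance) μ

namespace IsDependencyGraph

variable {G : SimpleGraph V} {X : V → Ω → ℝ}

lemma indepFun_sum (hG : G.IsDependencyGraph X μ) {i : V} {s : Finset V} (hi : i ∉ s)
    (hadj : ∀ w ∈ s, ¬ G.Adj i w) : IndepFun (X i) (fun ω ↦ ∑ w ∈ s, X w ω) μ := by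
  rw [IndepFun_iff_Indep]
  refine indep_of_indep_of_le_right (indep_of_indep_of_le_left
    (hG {i} s (Set.disjoint_singleton_left.2 hi) (by simpa using hadj)) ?_) ?_
  · exact le_iSup₂ (f := fun u (_ : u ∈ ({i} : Set V)) ↦
      MeasurableSpace.comap (X u) inferInstance) i rfl
  · exact measurable_iff_comap_le.1 <| Finset.measurable_sum s fun w hw ↦
      measurable_iff_comap_le.2 <| le_iSup₂ (f := fun w (_ : w ∈ (s : Set V)) ↦
        MeasurableSpace.comap (X w) inferInstance) w hw

lemma hasSubgaussianMGF_sum_of_isIndepSet [IsZeroOrProbabilityMeasure μ]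
    (hG : G.IsDependencyGraph X μ) {c : V → ℝ≥0} {s : Finset V} (hs : G.IsIndepSet s)
    (h : ∀ v ∈ s, HasSubgaussianMGF (X v) (c v) μ) :
    HasSubgaussianMGF (fun ω ↦ ∑ v ∈ s, X v ω) (∑ v ∈ s, c v) μ := by
  classical
  induction s using Finset.induction_on with
  | empty => simp
  | insert i s hi ih =>
    have hadj (w : V) (hw : w ∈ s) : ¬ G.Adj i w :=
      hs (by simp) (by simp [hw]) (ne_of_mem_of_not_mem hw hi).symm
    have hs' : G.IsIndepSet s := Set.Pairwise.mono (by simp) hs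
    simpa [sum_insert hi] using (h i (mem_insert_self i s)).add_of_indepFun
      (ih hs' fun v hv ↦ h v (mem_insert_of_mem hv)) (hG.indepFun_sum hi hadj)

lemma hasSubgaussianMGF_sum_of_coloring [Fintype V] [IsZeroOrProbabilityMeasure μ]
    (hG : G.IsDependencyGraph X μ) {α : Type*} [Fintype α] (C : G.Coloring α)
    {c : V → ℝ≥0} (h : ∀ v, HasSubgaussianMGF (X v) (c v) μ) :
    HasSubgaussianMGF (fun ω ↦ ∑ v, X v ω) (Fintype.card α * ∑ v, c v) μ := by
  let _ : DecidableEq α := Classical.decEq α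
  have hclass (a : α) :
      HasSubgaussianMGF (fun ω ↦ ∑ v with C v = a, X v ω) (∑ v with C v = a, c v) μ :=
    hG.hasSubgaussianMGF_sum_of_isIndepSet
      (fun u hu w hw _ huw ↦ C.valid huw (by simp_all)) fun v _ ↦ h v
  simpa only [card_univ, sum_fiberwise] using
    HasSubgaussianMGF.sum_card_mul univ fun a _ ↦ hclass a

end IsDependencyGraph

end SimpleGraph

theorem stmt_14_general {Ω : Type*} [MeasurableSpace Ω] (μ : Measure Ω) [IsProbabilityMeasure μ]
    {V : Type*} [Fintype V] (X : V → Ω → ℝ) (b : ℝ)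
    (hmeas : ∀ v, Measurable (X v))
    (hcent : ∀ v, ∫ ω, X v ω ∂μ = 0)
    (hbd : ∀ v, ∀ᵐ ω ∂μ, |X v ω| ≤ b)
    (G : SimpleGraph V) (χ : ℕ) (hχ : G.chromaticNumber = (χ : ℕ∞))
    (hdep : ∀ U W : Set V, Disjoint U W →
      (∀ u ∈ U, ∀ w ∈ W, ¬ G.Adj u w) →
      Indep (⨆ u ∈ U, MeasurableSpace.comap (X u) inferInstance)
            (⨆ w ∈ W, MeasurableSpace.comap (X w) inferInstance) μ) :
    ∀ t : ℝ, 0 < t →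
      μ {ω | |∑ v, X v ω| > t}
        ≤ ENNReal.ofReal
            (2 * Real.exp (-(t ^ 2) / (2 * χ * Fintype.card V * b ^ 2))) := by
  intro t ht
  obtain ⟨C⟩ : G.Colorable χ := SimpleGraph.chromaticNumber_le_iff_colorable.1 hχ.le
  have hsum := SimpleGraph.IsDependencyGraph.hasSubgaussianMGF_sum_of_coloring hdep C
    fun v ↦ hasSubgaussianMGF_of_abs_le (hmeas v).aemeasurable (hbd v) (hcent v)
  calc μ {ω | |∑ v, X v ω| > t}
      ≤ μ {ω | t ≤ |∑ v, X v ω|} := measure_mono fun ω hω ↦ le_of_lt (α := ℝ) hω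
    _ = ENNReal.ofReal (μ.real {ω | t ≤ |∑ v, X v ω|}) := (ofReal_measureReal).symm
    _ ≤ _ := ENNReal.ofReal_le_ofReal <| (hsum.measureReal_abs_ge_le ht.le).trans_eq ?_
  simp only [NNReal.coe_mul, NNReal.coe_natCast, NNReal.coe_pow, coe_nnnorm, norm_eq_abs, sq_abs,
    sum_const, card_univ, Fintype.card_fin, nsmul_eq_mul]
  ring_nf

/-- Janson's inequality: if `{X_v}` are centered, a.s. bounded by `b`, and admit
a dependency graph `G` with chromatic number `χ` (families of variables indexed
by disjoint vertex sets with no edges between them are independent), then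
`P(|∑ X_v| > t) ≤ 2 exp(-t² / (2 χ |V| b²))` for all `t > 0`. -/
theorem stmt_14 {Ω : Type*} [MeasurableSpace Ω] (μ : Measure Ω) [IsProbabilityMeasure μ]
    {V : Type*} [Fintype V] (X : V → Ω → ℝ) (b : ℝ) (hb : 0 < b)
    (hmeas : ∀ v, Measurable (X v))
    (hcent : ∀ v, ∫ ω, X v ω ∂μ = 0)
    (hbd : ∀ v, ∀ᵐ ω ∂μ, |X v ω| ≤ b)
    (G : SimpleGraph V) (χ : ℕ) (hχ : G.chromaticNumber = (χ : ℕ∞))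
    (hdep : ∀ U W : Set V, Disjoint U W →
      (∀ u ∈ U, ∀ w ∈ W, ¬ G.Adj u w) →
      Indep (⨆ u ∈ U, MeasurableSpace.comap (X u) inferInstance)
            (⨆ w ∈ W, MeasurableSpace.comap (X w) inferInstance) μ) :
    ∀ t : ℝ, 0 < t →
      μ {ω | |∑ v, X v ω| > t}
        ≤ ENNReal.ofReal
            (2 * Real.exp (-(t ^ 2) / (2 * χ * Fintype.card V * b ^ 2))) :=
  stmt_14_general μ X b hmeas hcent hbd G χ hχ hdep
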